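/- Let d ≥ 1, let a, b, a', c ∈ ℤ^d with c ≠ 0, let t be a real number with t ≥ 0 and a = a' + tc, and let Λ, Ω be real numbers with Λ ≥ 1 and Ω ≥ (Λ+1)(|a−b| + 1). If |a| ≥ Ω(|a'| + |c|)|c|, then |b| ≥ Λ(|a' + b − a| + |c|)|c| (that is, b = b' + tc with b' = a' + b − a satisfies |b| ≥ Λ(|b'| + |c|)|c|). -/

import Mathlib

/-!
Write `X = (‖a'‖ + ‖c‖)‖c‖` and `D = ‖a - b‖`. Moving from `a` to `b` changes both `‖a‖` and the
shifted vector `a' + b - a` by at most `D`, so it suffices that `ΛX + ΛD‖c‖ ≤ ΩX - D`.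
Since `‖c‖ ≥ 1` for a nonzero lattice vector, `X ≥ ‖c‖` and `X ≥ 1`, and this follows from
`Ω ≥ (Λ + 1)(D + 1)`.
-/

noncomputable def latt {d : ℕ} (a : Fin d → ℤ) : EuclideanSpace ℝ (Fin d) :=
  WithLp.toLp 2 (fun i => (a i : ℝ))

lemma latt_add {d : ℕ} (a b : Fin d → ℤ) : latt (a + b) = latt a + latt b := by
  ext i; simp [latt]

lemma latt_sub {d : ℕ} (a b : Fin d → ℤ) : latt (a - b) = latt a - latt b := by
  ext i; simp [latt]

lemma one_le_norm_latt {d : ℕ} {c : Fin d → ℤ} (hc : c ≠ 0) : 1 ≤ ‖latt c‖ := by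
  obtain ⟨i, hi⟩ := Function.ne_iff.mp hc
  calc (1 : ℝ) ≤ |(c i : ℝ)| := by exact_mod_cast Int.one_le_abs hi
    _ = ‖latt c i‖ := by simp [latt]
    _ ≤ ‖latt c‖ := PiLp.norm_apply_le (latt c) i

lemma mul_add_norm_mul_le_norm_of_norm_sub {E : Type*} [SeminormedAddCommGroup E]
    {a a' b c : E} {Λ Ω : ℝ} (hΛ : 0 ≤ Λ) (hc : 1 ≤ ‖c‖)
    (hΩ : (Λ + 1) * (‖a - b‖ + 1) ≤ Ω) (h : Ω * (‖a'‖ + ‖c‖) * ‖c‖ ≤ ‖a‖) :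
    Λ * (‖a' + b - a‖ + ‖c‖) * ‖c‖ ≤ ‖b‖ := by
  set X := (‖a'‖ + ‖c‖) * ‖c‖ with hX
  set D := ‖a - b‖
  have hD : 0 ≤ D := norm_nonneg _
  have hshift : ‖a' + b - a‖ ≤ ‖a'‖ + D := by
    rw [show a' + b - a = a' - (a - b) by abel]
    exact norm_sub_le _ _
  have hb : ‖a‖ - D ≤ ‖b‖ := by linarith [norm_sub_norm_le a b]
  have hcX : ‖c‖ ≤ X := by nlinarith [norm_nonneg a']
  have hX1 : 1 ≤ X := hc.trans hcX
  calc Λ * (‖a' + b - a‖ + ‖c‖) * ‖c‖ ≤ Λ * (‖a'‖ + D + ‖c‖) * ‖c‖ := by gcongr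
    _ = Λ * X + Λ * D * ‖c‖ := by ring
    _ ≤ Λ * X + Λ * D * X + (D + 1) * X - D := by
        nlinarith [mul_le_mul_of_nonneg_left hcX (mul_nonneg hΛ hD)]
    _ = (Λ + 1) * (D + 1) * X - D := by ring
    _ ≤ Ω * X - D := by gcongr
    _ ≤ ‖a‖ - D := by rw [hX, ← mul_assoc]; linarith
    _ ≤ ‖b‖ := hb

theorem stmt_3_general {d : ℕ} (a b a' c : Fin d → ℤ) (hc : c ≠ 0)
    (Λ Ω : ℝ) (hΛ : 1 ≤ Λ) (hΩ : (Λ + 1) * (‖latt (a - b)‖ + 1) ≤ Ω)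
    (h : Ω * (‖latt a'‖ + ‖latt c‖) * ‖latt c‖ ≤ ‖latt a‖) :
    Λ * (‖latt (a' + b - a)‖ + ‖latt c‖) * ‖latt c‖ ≤ ‖latt b‖ := by
  rw [latt_sub] at hΩ
  rw [latt_sub, latt_add]
  exact mul_add_norm_mul_le_norm_of_norm_sub (by linarith) (one_le_norm_latt hc) hΩ h

/-- Lemma 2.1(iv): let `a = a' + tc` with `t ≥ 0`, `Λ ≥ 1` and
`Ω ≥ (Λ+1)(|a−b| + 1)`.  If `|a| ≥ Ω(|a'| + |c|)|c|`, then
`|b| ≥ Λ(|b'| + |c|)|c|` where `b' = a' + b − a`. -/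
theorem stmt_3 {d : ℕ} (hd : 1 ≤ d) (a b a' c : Fin d → ℤ) (hc : c ≠ 0)
    (t : ℝ) (ht : 0 ≤ t) (hat : latt a = latt a' + t • latt c)
    (Λ Ω : ℝ) (hΛ : 1 ≤ Λ) (hΩ : (Λ + 1) * (‖latt (a - b)‖ + 1) ≤ Ω)
    (h : Ω * (‖latt a'‖ + ‖latt c‖) * ‖latt c‖ ≤ ‖latt a‖) :
    Λ * (‖latt (a' + b - a)‖ + ‖latt c‖) * ‖latt c‖ ≤ ‖latt b‖ :=
  stmt_3_general a b a' c hc Λ Ω hΛ hΩ h
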